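/- Suppose (U_n)_{n∈ℕ} is a sequence of nonempty subsets of C(ω*,ω*), each of the form ⋂_{i=0}^{k_n} [A_i^n, B_i^n] where all A_i^n, B_i^n are clopen subsets of ω*, and U_{n+1} ⊆ U_n for every n. Then there exists an injective map φ : ℕ → ℕ whose Stone–Čech extension βφ restricts to a continuous self-map of ω* that belongs to ⋂_{n∈ℕ} U_n; in particular ⋂_{n∈ℕ} U_n is nonempty. -/

import Mathlib

/-- `ω*`, the Stone–Čech remainder of the natural numbers. -/
abbrev OmegaStar : Type := {x : StoneCech ℕ // x ∉ Set.range stoneCechUnit}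

/-- The Stone–Čech extension `βφ : StoneCech ℕ → StoneCech ℕ` of a map `φ : ℕ → ℕ`. -/
noncomputable def betaExtend (φ : ℕ → ℕ) : StoneCech ℕ → StoneCech ℕ :=
  stoneCechExtend (continuous_stoneCechUnit.comp continuous_of_discreteTopology (f := φ))

/-!
Points of `ω*` are the free ultrafilters on `ℕ`, and every clopen subset of `ω*` is of the form
`M* = {u | M ∈ u}` for some `M ⊆ ℕ`. So the `U n` amount to countably many constraints
"`f` maps `M_t*` into `N_t*`", and since the `U n` are nested and nonempty, any finitely many of
them are met by a single `f`. Evaluating such an `f` at a free ultrafilter containing `⋂ M_t`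
shows: if `⋂_{t ∈ T} M_t` is infinite, so is `⋂_{t ∈ T} N_t`. From this a diagonal argument
produces an injective `φ` with `M_t \ φ⁻¹ N_t` finite for every `t`, and then `βφ` maps every
`M_t*` into `N_t*`.
-/

open Filter Set Topology TopologicalSpace

theorem exists_strictMono_finite_diff_preimage (A B : ℕ → Set ℕ)
    (hAB : ∀ T : Finset ℕ, (⋂ t ∈ T, A t).Infinite → (⋂ t ∈ T, B t).Infinite) :
    ∃ φ : ℕ → ℕ, StrictMono φ ∧ ∀ t, (A t \ φ ⁻¹' B t).Finite := by
  classical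
  -- `F k m` lists the constraints `t < m` with `k ∈ A t`; `m k` is the longest prefix of them whose
  -- `A`s still meet in an infinite set, and `φ k` is taken in the matching `B`s. A `k > t` that
  -- violates constraint `t` has `m k ≤ t`, so it lies in the finite set `⋂ i ∈ F k (t + 1), A i`,
  -- and `F k (t + 1)` ranges over the finitely many subsets of `range (t + 1)`.
  let F : ℕ → ℕ → Finset ℕ := fun k m => (Finset.range m).filter (k ∈ A ·)
  let good : ℕ → ℕ → Prop := fun k m => (⋂ t ∈ F k m, A t).Infinite
  let m : ℕ → ℕ := fun k => Nat.findGreatest (good k) k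
  have hm : ∀ k, good k (m k) := fun k =>
    Nat.findGreatest_spec (Nat.zero_le k) (by simpa [good, F] using infinite_univ)
  obtain ⟨φ, hφ, hφB⟩ := extraction_forall_of_frequently fun k =>
    Nat.frequently_atTop_iff_infinite.2 (hAB _ (hm k))
  refine ⟨φ, hφ, fun t => ?_⟩
  have hbad : A t \ φ ⁻¹' B t ⊆ Iic t ∪ ⋃ s ∈ (Finset.range (t + 1)).powerset.filter
      (fun s => (⋂ i ∈ s, A i).Finite), ⋂ i ∈ s, A i := by
    rintro k ⟨hkA, hkB⟩
    rcases le_or_gt k t with hkt | htk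
    · exact Or.inl hkt
    have hmk : m k < t + 1 := by
      by_contra! h
      exact hkB (mem_iInter₂.1 (hφB k) t (Finset.mem_filter.2 ⟨Finset.mem_range.2 h, hkA⟩))
    refine Or.inr (mem_biUnion (x := F k (t + 1)) ?_ ?_)
    · simpa [good, F] using Nat.findGreatest_is_greatest hmk htk
    · simp [F]
  refine ((finite_Iic t).union ?_).subset hbad
  exact (Finset.finite_toSet _).biUnion fun s hs => (Finset.mem_filter.1 hs).2

theorem exists_injective_finite_diff_preimage {ι : Type*} [Countable ι] (A B : ι → Set ℕ)
    (hAB : ∀ T : Finset ι, (⋂ t ∈ T, A t).Infinite → (⋂ t ∈ T, B t).Infinite) :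
    ∃ φ : ℕ → ℕ, Function.Injective φ ∧ ∀ t, (A t \ φ ⁻¹' B t).Finite := by
  classical
  cases isEmpty_or_nonempty ι
  · exact ⟨id, Function.injective_id, isEmptyElim⟩
  obtain ⟨e, he⟩ := exists_surjective_nat ι
  obtain ⟨φ, hφ, hφAB⟩ := exists_strictMono_finite_diff_preimage (A ∘ e) (B ∘ e) fun T hT => by
    simpa [Finset.set_biInter_finset_image] using
      hAB (T.image e) (by simpa [Finset.set_biInter_finset_image])
  refine ⟨φ, hφ.injective, fun t => ?_⟩
  obtain ⟨n, rfl⟩ := he t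
  exact hφAB n

section StoneCechUltrafilter

variable (α : Type*) [TopologicalSpace α] [DiscreteTopology α]

noncomputable def stoneCechHomeomorphUltrafilter : StoneCech α ≃ₜ Ultrafilter α where
  toFun := stoneCechExtend (continuous_of_discreteTopology (f := (pure : α → Ultrafilter α)))
  invFun := Ultrafilter.extend stoneCechUnit
  left_inv x := congrFun (stoneCech_hom_ext
    ((continuous_ultrafilter_extend _).comp (continuous_stoneCechExtend _)) continuous_id
    (funext fun a => by simp [stoneCechExtend_stoneCechUnit, ultrafilter_extend_pure])) x
  right_inv u := congrFun (denseRange_pure.equalizer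
    ((continuous_stoneCechExtend _).comp (continuous_ultrafilter_extend _)) continuous_id
    (funext fun a => by simp [stoneCechExtend_stoneCechUnit, ultrafilter_extend_pure])) u
  continuous_toFun := continuous_stoneCechExtend _
  continuous_invFun := continuous_ultrafilter_extend _

variable {α}

@[simp]
lemma stoneCechHomeomorphUltrafilter_stoneCechUnit (a : α) :
    stoneCechHomeomorphUltrafilter α (stoneCechUnit a) = pure a :=
  stoneCechExtend_stoneCechUnit continuous_of_discreteTopology a

lemma notMem_range_stoneCechUnit_iff {x : StoneCech α} :
    x ∉ range stoneCechUnit ↔ (stoneCechHomeomorphUltrafilter α x : Filter α) ≤ cofinite := by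
  set e := stoneCechHomeomorphUltrafilter α
  have hrange : e '' range stoneCechUnit = range pure := by
    rw [← range_comp]
    exact congrArg range (funext fun a => by simp [e])
  rw [← e.injective.mem_set_image, hrange]
  refine ⟨fun hx => (e x).le_cofinite_or_eq_pure.resolve_right fun ⟨a, ha⟩ => hx ⟨a, ha.symm⟩, ?_⟩
  rintro h ⟨a, ha⟩
  simpa [← ha] using le_cofinite_iff_compl_singleton_mem.1 h a

end StoneCechUltrafilter

lemma Ultrafilter.continuous_map {α β : Type*} (f : α → β) : Continuous (Ultrafilter.map f) :=
  ultrafilterBasis_is_basis.continuous_iff.2 <| by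
    rintro _ ⟨s, rfl⟩
    exact ultrafilter_isOpen_basic (f ⁻¹' s)

lemma Ultrafilter.isClosed_setOf_le_cofinite {α : Type*} :
    IsClosed {u : Ultrafilter α | (u : Filter α) ≤ cofinite} := by
  simp only [le_cofinite_iff_compl_singleton_mem, ofPred_forall]
  exact isClosed_iInter fun a => ultrafilter_isClosed_basic _

lemma continuous_betaExtend (φ : ℕ → ℕ) : Continuous (betaExtend φ) :=
  continuous_stoneCechExtend _

@[simp]
lemma betaExtend_stoneCechUnit (φ : ℕ → ℕ) (n : ℕ) :
    betaExtend φ (stoneCechUnit n) = stoneCechUnit (φ n) :=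
  stoneCechExtend_stoneCechUnit _ n

lemma stoneCechHomeomorphUltrafilter_betaExtend (φ : ℕ → ℕ) (x : StoneCech ℕ) :
    stoneCechHomeomorphUltrafilter ℕ (betaExtend φ x) =
      (stoneCechHomeomorphUltrafilter ℕ x).map φ := by
  have h := stoneCech_hom_ext
    ((stoneCechHomeomorphUltrafilter ℕ).continuous.comp (continuous_betaExtend φ))
    ((Ultrafilter.continuous_map φ).comp (stoneCechHomeomorphUltrafilter ℕ).continuous)
    (funext fun n => by simp)
  exact congrFun h x

namespace OmegaStar

noncomputable def homeomorphFreeUltrafilter :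
    OmegaStar ≃ₜ {u : Ultrafilter ℕ // (u : Filter ℕ) ≤ cofinite} :=
  (stoneCechHomeomorphUltrafilter ℕ).subtype fun _ => notMem_range_stoneCechUnit_iff

noncomputable def ultrafilter (x : OmegaStar) : Ultrafilter ℕ := (homeomorphFreeUltrafilter x).1

lemma ultrafilter_le_cofinite (x : OmegaStar) : (x.ultrafilter : Filter ℕ) ≤ cofinite :=
  (homeomorphFreeUltrafilter x).2

lemma isInducing_ultrafilter : IsInducing ultrafilter :=
  IsInducing.subtypeVal.comp homeomorphFreeUltrafilter.isInducing

lemma exists_ultrafilter_eq {u : Ultrafilter ℕ} (hu : (u : Filter ℕ) ≤ cofinite) :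
    ∃ x : OmegaStar, x.ultrafilter = u :=
  ⟨homeomorphFreeUltrafilter.symm ⟨u, hu⟩, by simp [ultrafilter]⟩

instance : CompactSpace OmegaStar :=
  have : CompactSpace {u : Ultrafilter ℕ // (u : Filter ℕ) ≤ cofinite} :=
    isCompact_iff_compactSpace.1 Ultrafilter.isClosed_setOf_le_cofinite.isCompact
  homeomorphFreeUltrafilter.symm.compactSpace

/-- The clopen set `M*` of `ω*`. -/
def starSet (M : Set ℕ) : Set OmegaStar := ultrafilter ⁻¹' {u | M ∈ u}

variable {M : Set ℕ} {x : OmegaStar}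

@[simp]
lemma mem_starSet : x ∈ starSet M ↔ M ∈ x.ultrafilter := Iff.rfl

lemma starSet_nonempty_iff : (starSet M).Nonempty ↔ M.Infinite := by
  constructor
  · rintro ⟨x, hx⟩ hM
    exact Ultrafilter.compl_mem_iff_notMem.1 (x.ultrafilter_le_cofinite hM.compl_mem_cofinite) hx
  · intro hM
    have := hM.cofinite_inf_principal_neBot
    have hle := Ultrafilter.of_le (cofinite ⊓ 𝓟 M)
    obtain ⟨x, hx⟩ := exists_ultrafilter_eq (hle.trans inf_le_left)
    exact ⟨x, by rw [mem_starSet, hx]; exact hle (mem_inf_of_right (mem_principal_self M))⟩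

lemma starSet_biInter {ι : Type*} (T : Finset ι) (M : ι → Set ℕ) :
    starSet (⋂ i ∈ T, M i) = ⋂ i ∈ T, starSet (M i) := by
  ext x
  simp [← Ultrafilter.mem_coe, Filter.biInter_finset_mem]

lemma starSet_biUnion {ι : Type*} {s : Set ι} (hs : s.Finite) (M : ι → Set ℕ) :
    starSet (⋃ i ∈ s, M i) = ⋃ i ∈ s, starSet (M i) := by
  ext x
  simp [Ultrafilter.finite_biUnion_mem_iff hs]

lemma isClosed_starSet (M : Set ℕ) : IsClosed (starSet M) :=
  (ultrafilter_isClosed_basic M).preimage isInducing_ultrafilter.continuous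

lemma isTopologicalBasis_range_starSet : IsTopologicalBasis (range starSet) := by
  have := ultrafilterBasis_is_basis.isInducing isInducing_ultrafilter
  rwa [ultrafilterBasis, ← range_comp] at this

lemma exists_eq_starSet_of_isClopen {C : Set OmegaStar} (hC : IsClopen C) :
    ∃ M, C = starSet M := by
  obtain ⟨s, hs, rfl⟩ := (isCompact_open_iff_eq_finite_iUnion_of_isTopologicalBasis starSet
    isTopologicalBasis_range_starSet (fun M => (isClosed_starSet M).isCompact) C).1
    ⟨hC.isClosed.isCompact, hC.isOpen⟩
  exact ⟨_, (starSet_biUnion hs id).symm⟩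

lemma infinite_biInter_of_mapsTo {ι : Type*} {g : OmegaStar → OmegaStar} {T : Finset ι}
    {A B : ι → Set ℕ} (hg : ∀ i ∈ T, MapsTo g (starSet (A i)) (starSet (B i)))
    (hA : (⋂ i ∈ T, A i).Infinite) : (⋂ i ∈ T, B i).Infinite := by
  obtain ⟨x, hx⟩ := starSet_nonempty_iff.2 hA
  rw [starSet_biInter, mem_iInter₂] at hx
  refine starSet_nonempty_iff.1 ⟨g x, ?_⟩
  rw [starSet_biInter, mem_iInter₂]
  exact fun i hi => hg i hi (hx i hi)

noncomputable def betaExtendMap (φ : ℕ → ℕ) (hφ : Tendsto φ cofinite cofinite) :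
    C(OmegaStar, OmegaStar) where
  toFun x := ⟨betaExtend φ x, notMem_range_stoneCechUnit_iff.2 <| by
    rw [stoneCechHomeomorphUltrafilter_betaExtend, Ultrafilter.coe_map]
    exact (map_mono x.ultrafilter_le_cofinite).trans hφ⟩
  continuous_toFun :=
    ((continuous_betaExtend φ).comp continuous_subtype_val).subtype_mk _

lemma ultrafilter_betaExtendMap {φ : ℕ → ℕ} (hφ : Tendsto φ cofinite cofinite) (x : OmegaStar) :
    (betaExtendMap φ hφ x).ultrafilter = x.ultrafilter.map φ :=
  stoneCechHomeomorphUltrafilter_betaExtend φ x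

lemma mapsTo_betaExtendMap {φ : ℕ → ℕ} (hφ : Tendsto φ cofinite cofinite) {A B : Set ℕ}
    (hAB : (A \ φ ⁻¹' B).Finite) : MapsTo (betaExtendMap φ hφ) (starSet A) (starSet B) := by
  intro x hA
  have hgood : (A \ φ ⁻¹' B)ᶜ ∈ x.ultrafilter := x.ultrafilter_le_cofinite hAB.compl_mem_cofinite
  rw [mem_starSet, ultrafilter_betaExtendMap, Ultrafilter.mem_map]
  exact mem_of_superset (inter_mem hA hgood) fun a ⟨ha, ha'⟩ => by_contra fun hb => ha' ⟨ha, hb⟩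

end OmegaStar

open OmegaStar

/-- If `(U n)` is a decreasing sequence of nonempty subsets of `C(ω*, ω*)`, each a finite
intersection of sets `[A, B] = {f | f '' A ⊆ B}` with `A`, `B` clopen in `ω*`, then there is an
injective `φ : ℕ → ℕ` whose Stone–Čech extension restricts to a continuous self-map of `ω*`
lying in `⋂ n, U n`; in particular `⋂ n, U n` is nonempty. -/
theorem nested_basic_sets_inter_nonempty
    (U : ℕ → Set C(OmegaStar, OmegaStar))
    (hne : ∀ n, (U n).Nonempty)
    (hform : ∀ n, ∃ (k : ℕ) (A B : Fin (k + 1) → Set OmegaStar),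
      (∀ i, IsClopen (A i)) ∧ (∀ i, IsClopen (B i)) ∧
      U n = ⋂ i, {f : C(OmegaStar, OmegaStar) | (f : OmegaStar → OmegaStar) '' A i ⊆ B i})
    (hnested : ∀ n, U (n + 1) ⊆ U n) :
    (∃ (φ : ℕ → ℕ), Function.Injective φ ∧
      ∃ f : C(OmegaStar, OmegaStar),
        (∀ x : OmegaStar, betaExtend φ (x : StoneCech ℕ) = (f x : StoneCech ℕ)) ∧
        f ∈ ⋂ n, U n) ∧
    (⋂ n, U n).Nonempty := by
  choose k A B hA hB hU using hform
  choose M hM using fun c : Σ n, Fin (k n + 1) => exists_eq_starSet_of_isClopen (hA c.1 c.2)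
  choose N hN using fun c : Σ n, Fin (k n + 1) => exists_eq_starSet_of_isClopen (hB c.1 c.2)
  have mem_U : ∀ {n} {f : C(OmegaStar, OmegaStar)},
      f ∈ U n ↔ ∀ i, MapsTo f (starSet (M ⟨n, i⟩)) (starSet (N ⟨n, i⟩)) := by
    intro n f
    simp only [hU, mem_iInter, mem_ofPred_eq, ← mapsTo_iff_image_subset]
    exact forall_congr' fun i => by rw [hM ⟨n, i⟩, hN ⟨n, i⟩]
  have hMN : ∀ T : Finset (Σ n, Fin (k n + 1)),
      (⋂ c ∈ T, M c).Infinite → (⋂ c ∈ T, N c).Infinite := fun T => by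
    obtain ⟨f, hf⟩ := hne (T.sup Sigma.fst)
    exact infinite_biInter_of_mapsTo fun c hc =>
      mem_U.1 (antitone_nat_of_succ_le hnested (T.le_sup hc) hf) c.2
  obtain ⟨φ, hφ, hφMN⟩ := exists_injective_finite_diff_preimage M N hMN
  let f := betaExtendMap φ hφ.tendsto_cofinite
  have hf : f ∈ ⋂ n, U n := mem_iInter.2 fun n => mem_U.2 fun i => mapsTo_betaExtendMap _ (hφMN _)
  exact ⟨⟨φ, hφ, f, fun _ => rfl, hf⟩, f, hf⟩
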